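/- For all integers n, ℓ with 1 ≤ ℓ ≤ n−1, the von Neumann entropy (in bits) of the ℓ-qubit reduced density matrix of W_n (the partial trace of |W_n⟩⟨W_n| over the last n−ℓ qubits) equals −(ℓ/n)·log₂(ℓ/n) − ((n−ℓ)/n)·log₂((n−ℓ)/n). -/

import Mathlib

/-!
STATEMENT 5: For all integers n, ℓ with 1 ≤ ℓ ≤ n−1, the von Neumann entropy (in bits)
of the ℓ-qubit reduced density matrix of W_n (the partial trace of |W_n⟩⟨W_n| over the
last n−ℓ qubits) equals −(ℓ/n)·log₂(ℓ/n) − ((n−ℓ)/n)·log₂((n−ℓ)/n).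
-/

/-- Glue a length-`l` bit string and a length-`n-l` bit string into a length-`n` bit
string, realizing the identification of `ℂ^{2^n}` with `ℂ^{2^l} ⊗ ℂ^{2^{n-l}}`. -/
def glueBits {l n : ℕ} (hl : l ≤ n) (k : Fin l → Fin 2) (m : Fin (n - l) → Fin 2) :
    Fin n → Fin 2 :=
  fun i => if h : (i : ℕ) < l then k ⟨i, h⟩ else m ⟨(i : ℕ) - l, by have := i.isLt; omega⟩

/-- The `n`-qubit W state `W_n = (1/√n) ∑_j e_{x_j}`. -/
noncomputable def wState (n : ℕ) : (Fin n → Fin 2) → ℂ :=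
  fun v => (1 / Real.sqrt n) *
    ∑ j : Fin n, if v = (fun i => if i = j then 1 else 0) then 1 else 0

/-- The rank-one projection `|W_n⟩⟨W_n|`, written as a matrix on the pair index
`(Fin l → Fin 2) × (Fin (n-l) → Fin 2)` via the identification `glueBits`. -/
noncomputable def wPairedProj (n l : ℕ) (hl : l ≤ n) :
    Matrix ((Fin l → Fin 2) × (Fin (n - l) → Fin 2))
      ((Fin l → Fin 2) × (Fin (n - l) → Fin 2)) ℂ :=
  Matrix.of fun p q =>
    wState n (glueBits hl p.1 p.2) * star (wState n (glueBits hl q.1 q.2))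

/-- Partial trace over the second tensor factor:
`(Tr_B ρ)_{k,k'} = ∑_m ρ_{(k,m),(k',m)}`. -/
noncomputable def ptraceB {α β : Type*} [Fintype β]
    (ρ : Matrix (α × β) (α × β) ℂ) : Matrix α α ℂ :=
  Matrix.of fun k k' => ∑ m : β, ρ (k, m) (k', m)

/-- The von Neumann entropy in bits, `S(ρ) = −∑ᵢ λᵢ log₂ λᵢ`, of a Hermitian matrix
(with the convention `0·log₂ 0 = 0`, which holds automatically since
`Real.logb 2 0 = 0`). -/
noncomputable def vnEntropy {ι : Type*} [Fintype ι] [DecidableEq ι]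
    {ρ : Matrix ι ι ℂ} (h : ρ.IsHermitian) : ℝ :=
  -∑ i, h.eigenvalues i * Real.logb 2 (h.eigenvalues i)

/-!
Splitting the bit strings at position `ℓ` gives
`W_n = √(ℓ/n) W_ℓ ⊗ |0⟩ + √((n-ℓ)/n) |0⟩ ⊗ W_{n-ℓ}`, so the reduced state is `|u⟩⟨u| + |v⟩⟨v|`
with orthogonal `u`, `v` of squared norms `ℓ/n` and `(n-ℓ)/n`. Such a matrix is annihilated by
`X (X - ℓ/n) (X - (n-ℓ)/n)`, and the traces of it and of its square force its spectrum to be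
`ℓ/n`, `(n-ℓ)/n` and zeros.
-/

open Matrix Polynomial

theorem Pi.single_left_injective {ι M : Type*} [DecidableEq ι] [Zero M] {x : M} (hx : x ≠ 0) :
    Function.Injective fun j : ι => Pi.single j x := fun i j h => by
  simpa [Pi.single_apply, hx] using congrFun h i

theorem hammingNorm_eq_one_iff {ι : Type*} [Fintype ι] [DecidableEq ι] {v : ι → Fin 2} :
    hammingNorm v = 1 ↔ ∃ j, v = Pi.single j 1 := by
  rw [hammingNorm, Finset.card_eq_one]
  refine exists_congr fun j => ?_
  simp only [Finset.ext_iff, Finset.mem_filter, Finset.mem_univ, true_and,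
    Finset.mem_singleton, funext_iff, Pi.single_apply]
  refine forall_congr' fun i => ?_
  split_ifs with hij <;> simp only [hij, iff_true, iff_false, not_not]; omega

theorem card_filter_hammingNorm_eq_one (ι : Type*) [Fintype ι] [DecidableEq ι] :
    (Finset.univ.filter fun v : ι → Fin 2 => hammingNorm v = 1).card = Fintype.card ι := by
  have : (Finset.univ.filter fun v : ι → Fin 2 => hammingNorm v = 1) =
      Finset.univ.image fun j => Pi.single j 1 := by
    ext v
    simp only [Finset.mem_filter, Finset.mem_univ, true_and, Finset.mem_image,
      hammingNorm_eq_one_iff]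
    exact exists_congr fun j => eq_comm
  rw [this, Finset.card_image_of_injective _ (Pi.single_left_injective one_ne_zero),
    Finset.card_univ]

theorem Finset.sum_comp_eq_of_sum_eq_of_sum_sq_eq {ι : Type*} [Fintype ι] (g : ℝ → ℝ)
    (hg : g 0 = 0) {x : ι → ℝ} {a b : ℝ} (ha : a ≠ 0) (hb : b ≠ 0)
    (hx : ∀ i, x i = 0 ∨ x i = a ∨ x i = b)
    (hsum : ∑ i, x i = a + b) (hsq : ∑ i, x i ^ 2 = a ^ 2 + b ^ 2) :
    ∑ i, g (x i) = g a + g b := by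
  -- on `{0, a, b}`, `g` agrees with a quadratic polynomial `c x + d x²` without constant term
  obtain ⟨c, d, hca, hcb⟩ : ∃ c d : ℝ, c * a + d * a ^ 2 = g a ∧ c * b + d * b ^ 2 = g b := by
    rcases eq_or_ne a b with rfl | hab
    · exact ⟨g a / a, 0, by simp [ha], by simp [ha]⟩
    · have : a - b ≠ 0 := sub_ne_zero.mpr hab
      refine ⟨(g b * a ^ 2 - g a * b ^ 2) / (a * b * (a - b)),
        (g a * b - g b * a) / (a * b * (a - b)), ?_, ?_⟩ <;> field_simp <;> ring
  have hquad : ∀ i, g (x i) = c * x i + d * x i ^ 2 := fun i => by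
    rcases hx i with h | h | h <;> simp [h, hg, hca, hcb]
  simp only [hquad, Finset.sum_add_distrib, ← Finset.mul_sum, hsum, hsq]
  rw [← hca, ← hcb]
  ring

theorem Matrix.vecMulVec_mul_vecMulVec_star {ι : Type*} [Fintype ι] {u v : ι → ℂ} :
    vecMulVec u (star u) * vecMulVec v (star v) = (star u ⬝ᵥ v) • vecMulVec u (star v) := by
  rw [vecMulVec_mul_vecMulVec, vecMulVec_smul]

namespace Matrix.IsHermitian

variable {ι : Type*} [Fintype ι] [DecidableEq ι] {A : Matrix ι ι ℂ}

theorem isRoot_eigenvalues_of_aeval_eq_zero (hA : A.IsHermitian) {p : ℂ[X]}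
    (hp : aeval A p = 0) (i : ι) : p.IsRoot (hA.eigenvalues i : ℂ) := by
  have : Nonempty ι := ⟨i⟩
  have hmem : (hA.eigenvalues i : ℂ) ∈ spectrum ℂ A :=
    (spectrum.algebraMap_mem_iff ℂ).mpr (hA.eigenvalues_mem_spectrum_real i)
  simpa [hp, spectrum.zero_eq] using spectrum.subset_polynomial_aeval A p ⟨_, hmem, rfl⟩

theorem trace_pow_eq_sum_eigenvalues_pow (hA : A.IsHermitian) (k : ℕ) :
    (A ^ k).trace = ∑ i, (hA.eigenvalues i : ℂ) ^ k := by
  conv_lhs => rw [hA.spectral_theorem, ← map_pow, diagonal_pow, Unitary.conjStarAlgAut_apply,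
    trace_mul_cycle, Unitary.coe_star_mul_self, one_mul, trace_diagonal]
  simp

theorem sum_comp_eigenvalues_of_eq_vecMulVec_add (hA : A.IsHermitian)
    {u v : ι → ℂ} {a b : ℝ} (ha : a ≠ 0) (hb : b ≠ 0) (hu : star u ⬝ᵥ u = a)
    (hv : star v ⬝ᵥ v = b) (huv : star u ⬝ᵥ v = 0)
    (hA_eq : A = vecMulVec u (star u) + vecMulVec v (star v)) (g : ℝ → ℝ) (hg : g 0 = 0) :
    ∑ i, g (hA.eigenvalues i) = g a + g b := by
  set P := vecMulVec u (star u)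
  set Q := vecMulVec v (star v)
  have hvu : star v ⬝ᵥ u = 0 := by rw [star_dotProduct, huv, star_zero]
  have hPP : P * P = (a : ℂ) • P := by rw [vecMulVec_mul_vecMulVec_star, hu]
  have hQQ : Q * Q = (b : ℂ) • Q := by rw [vecMulVec_mul_vecMulVec_star, hv]
  have hPQ : P * Q = 0 := by rw [vecMulVec_mul_vecMulVec_star, huv, zero_smul]
  have hQP : Q * P = 0 := by rw [vecMulVec_mul_vecMulVec_star, hvu, zero_smul]
  have htrP : P.trace = a := by rw [trace_vecMulVec, dotProduct_comm, hu]
  have htrQ : Q.trace = b := by rw [trace_vecMulVec, dotProduct_comm, hv]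
  have hsq : A ^ 2 = (a : ℂ) • P + (b : ℂ) • Q := by
    rw [sq, hA_eq, add_mul, mul_add, mul_add, hPP, hQQ, hPQ, hQP, zero_add, add_zero]
  have hroot : ∀ i, hA.eigenvalues i = 0 ∨ hA.eigenvalues i = a ∨ hA.eigenvalues i = b := by
    intro i
    have := hA.isRoot_eigenvalues_of_aeval_eq_zero (p := X * (X - C (a : ℂ)) * (X - C (b : ℂ)))
      ?_ i
    · simpa [sub_eq_zero, or_assoc] using this
    · simp only [map_mul, map_sub, aeval_X, aeval_C, Algebra.algebraMap_eq_smul_one, hA_eq,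
        mul_sub, sub_mul, add_mul, mul_add, smul_mul_assoc, mul_smul_comm, mul_one, hPP, hQQ,
        hPQ, hQP, smul_add, smul_smul, smul_zero, add_zero, zero_add]
      module
  have htr : A.trace = (a : ℂ) + b := by rw [hA_eq, trace_add, htrP, htrQ]
  have htr2 : (A ^ 2).trace = (a : ℂ) ^ 2 + b ^ 2 := by
    rw [hsq, trace_add, trace_smul, trace_smul, htrP, htrQ, smul_eq_mul, smul_eq_mul, sq, sq]
  refine Finset.sum_comp_eq_of_sum_eq_of_sum_sq_eq g hg ha hb hroot ?_ ?_
  · apply Complex.ofReal_injective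
    push_cast
    exact hA.trace_eq_sum_eigenvalues.symm.trans htr
  · apply Complex.ofReal_injective
    push_cast
    exact (hA.trace_pow_eq_sum_eigenvalues_pow 2).symm.trans htr2

end Matrix.IsHermitian

theorem star_sqrt_smul_dotProduct_sqrt_smul {ι : Type*} [Fintype ι] {r : ℝ} (hr : 0 ≤ r)
    (x y : ι → ℂ) :
    star ((Real.sqrt r : ℂ) • x) ⬝ᵥ ((Real.sqrt r : ℂ) • y) = r * (star x ⬝ᵥ y) := by
  rw [star_smul, smul_dotProduct, dotProduct_smul, smul_smul, Complex.star_def,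
    Complex.conj_ofReal, ← Complex.ofReal_mul, Real.mul_self_sqrt hr, smul_eq_mul]

theorem ptraceB_vecMulVec_add {α β : Type*} [Fintype β] (u u' : α → ℂ) {e e' : β → ℂ}
    (he : star e ⬝ᵥ e = 1) (he' : star e' ⬝ᵥ e' = 1) (hee' : star e ⬝ᵥ e' = 0) :
    ptraceB (vecMulVec (fun p => u p.1 * e p.2 + u' p.1 * e' p.2)
        (star fun p => u p.1 * e p.2 + u' p.1 * e' p.2)) =
      vecMulVec u (star u) + vecMulVec u' (star u') := by
  have he'e : star e' ⬝ᵥ e = 0 := by rw [star_dotProduct, hee', star_zero]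
  simp only [dotProduct, Pi.star_apply] at he he' hee' he'e
  ext k k'
  simp only [ptraceB, of_apply, vecMulVec_apply, Pi.star_apply, Matrix.add_apply, star_add,
    star_mul']
  calc ∑ m, (u k * e m + u' k * e' m) * (star (u k') * star (e m) + star (u' k') * star (e' m))
      = ∑ m, (u k * star (u k') * (star (e m) * e m) + u k * star (u' k') * (star (e' m) * e m)
          + u' k * star (u k') * (star (e m) * e' m)
          + u' k * star (u' k') * (star (e' m) * e' m)) :=
        Finset.sum_congr rfl fun m _ => by ring
    _ = u k * star (u k') + u' k * star (u' k') := by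
        simp only [Finset.sum_add_distrib, ← Finset.mul_sum, he, he', hee', he'e]
        ring

theorem hammingNorm_glueBits {l n : ℕ} (hl : l ≤ n) (k : Fin l → Fin 2)
    (m : Fin (n - l) → Fin 2) :
    hammingNorm (glueBits hl k m) = hammingNorm k + hammingNorm m := by
  simp only [hammingNorm, Finset.card_filter]
  rw [← (finCongr (show l + (n - l) = n by omega)).sum_comp, Fin.sum_univ_add]
  simp [glueBits]

theorem wState_apply (n : ℕ) (v : Fin n → Fin 2) :
    wState n v = if hammingNorm v = 1 then 1 / (Real.sqrt n : ℂ) else 0 := by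
  have hsingle : ∀ j : Fin n, (fun i => if i = j then (1 : Fin 2) else 0) = Pi.single j 1 :=
    fun j => funext fun i => (Pi.single_apply j 1 i).symm
  simp only [wState, hsingle]
  split_ifs with hv
  · obtain ⟨j₀, rfl⟩ := hammingNorm_eq_one_iff.mp hv
    simp [(Pi.single_left_injective one_ne_zero).eq_iff]
  · rw [Finset.sum_eq_zero fun j _ => if_neg fun h => hv (hammingNorm_eq_one_iff.mpr ⟨j, h⟩),
      mul_zero]

theorem wState_zero (n : ℕ) : wState n 0 = 0 := by
  simp [wState_apply]

theorem star_wState (n : ℕ) : star (wState n) = wState n := by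
  ext v
  rw [Pi.star_apply, wState_apply]
  split_ifs <;> simp [Complex.conj_ofReal]

theorem star_dotProduct_wState_self {n : ℕ} (hn : 0 < n) : star (wState n) ⬝ᵥ wState n = 1 := by
  have hsqrt : (Real.sqrt n : ℂ) ^ 2 = n := by
    rw [← Complex.ofReal_pow, Real.sq_sqrt n.cast_nonneg, Complex.ofReal_natCast]
  have hn' : (n : ℂ) ≠ 0 := by exact_mod_cast hn.ne'
  have hsq : ∀ v, wState n v * wState n v =
      if hammingNorm v = 1 then 1 / (Real.sqrt n : ℂ) * (1 / (Real.sqrt n : ℂ)) else 0 := by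
    intro v
    rw [wState_apply]
    split_ifs <;> simp
  simp only [star_wState, dotProduct, hsq]
  rw [← Finset.sum_filter, Finset.sum_const, card_filter_hammingNorm_eq_one, Fintype.card_fin,
    nsmul_eq_mul]
  field_simp
  rw [hsqrt, div_self hn']

def ketZero (n : ℕ) : (Fin n → Fin 2) → ℂ := Pi.single 0 1

theorem wState_glueBits {l n : ℕ} (hl : 0 < l) (hln : l < n) (k : Fin l → Fin 2)
    (m : Fin (n - l) → Fin 2) :
    wState n (glueBits hln.le k m) =
      (Real.sqrt (l / n) : ℂ) * wState l k * ketZero (n - l) m +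
        (Real.sqrt ((n - l) / n) : ℂ) * ketZero l k * wState (n - l) m := by
  have hscale : ∀ x : ℝ, 0 < x →
      (Real.sqrt (x / n) : ℂ) * (1 / (Real.sqrt x : ℂ)) = 1 / (Real.sqrt n : ℂ) := by
    intro x hx
    have : (Real.sqrt x : ℂ) ≠ 0 := by exact_mod_cast (Real.sqrt_pos.mpr hx).ne'
    rw [Real.sqrt_div' _ n.cast_nonneg]
    push_cast
    field_simp
  simp only [wState_apply, hammingNorm_glueBits, ketZero, Pi.single_apply]
  by_cases hk : k = 0 <;> by_cases hm : m = 0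
  · simp [hk, hm]
  · subst hk
    split_ifs <;> simp_all [Nat.cast_sub hln.le]
  · subst hm
    split_ifs <;> simp_all
  · have := hammingNorm_pos_iff.mpr hk
    have := hammingNorm_pos_iff.mpr hm
    simp only [hk, hm, if_false, mul_zero, zero_mul, add_zero]
    rw [if_neg (by omega)]

theorem ptraceB_wPairedProj {n l : ℕ} (hl : 0 < l) (hln : l < n) :
    ptraceB (wPairedProj n l hln.le) =
      vecMulVec ((Real.sqrt (l / n) : ℂ) • wState l)
          (star ((Real.sqrt (l / n) : ℂ) • wState l)) +
        vecMulVec ((Real.sqrt ((n - l) / n) : ℂ) • ketZero l)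
          (star ((Real.sqrt ((n - l) / n) : ℂ) • ketZero l)) := by
  have hket : star (ketZero (n - l)) ⬝ᵥ ketZero (n - l) = 1 := by
    simp [ketZero]
  have hketW : star (ketZero (n - l)) ⬝ᵥ wState (n - l) = 0 := by
    simp [ketZero, wState_zero]
  have hψ : (fun p : (Fin l → Fin 2) × (Fin (n - l) → Fin 2) =>
        wState n (glueBits hln.le p.1 p.2)) =
      fun p => ((Real.sqrt (l / n) : ℂ) • wState l) p.1 * ketZero (n - l) p.2 +
        ((Real.sqrt ((n - l) / n) : ℂ) • ketZero l) p.1 * wState (n - l) p.2 :=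
    funext fun p => wState_glueBits hl hln p.1 p.2
  have key := ptraceB_vecMulVec_add ((Real.sqrt (l / n) : ℂ) • wState l)
    ((Real.sqrt ((n - l) / n) : ℂ) • ketZero l) hket
    (star_dotProduct_wState_self (by omega)) hketW
  rwa [← hψ] at key

theorem w_state_subsystem_entropy (n l : ℕ) (h1 : 1 ≤ l) (h2 : l ≤ n - 1)
    (h : (ptraceB (wPairedProj n l (by omega))).IsHermitian) :
    vnEntropy h =
      -((l : ℝ) / n) * Real.logb 2 ((l : ℝ) / n) -
        (((n : ℝ) - l) / n) * Real.logb 2 (((n : ℝ) - l) / n) := by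
  have hln : l < n := by omega
  have hn : (0 : ℝ) < n := by exact_mod_cast (by omega : 0 < n)
  have ha : (0 : ℝ) < l / n := div_pos (by exact_mod_cast h1) hn
  have hb : (0 : ℝ) < (n - l) / n := div_pos (sub_pos.mpr (by exact_mod_cast hln)) hn
  have hu : star ((Real.sqrt (l / n) : ℂ) • wState l) ⬝ᵥ ((Real.sqrt (l / n) : ℂ) • wState l) =
      ((l / n : ℝ) : ℂ) := by
    rw [star_sqrt_smul_dotProduct_sqrt_smul ha.le, star_dotProduct_wState_self h1, mul_one]
  have hv : star ((Real.sqrt ((n - l) / n) : ℂ) • ketZero l) ⬝ᵥ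
      ((Real.sqrt ((n - l) / n) : ℂ) • ketZero l) = (((n - l) / n : ℝ) : ℂ) := by
    rw [star_sqrt_smul_dotProduct_sqrt_smul hb.le]
    simp [ketZero]
  have huv : star ((Real.sqrt (l / n) : ℂ) • wState l) ⬝ᵥ
      ((Real.sqrt ((n - l) / n) : ℂ) • ketZero l) = 0 := by
    simp [star_smul, ketZero, star_wState, wState_zero]
  rw [vnEntropy, h.sum_comp_eigenvalues_of_eq_vecMulVec_add ha.ne' hb.ne' hu hv huv
    (ptraceB_wPairedProj h1 hln) (fun x => x * Real.logb 2 x) (by simp)]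
  ring
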